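/- Let K and L be origin-symmetric convex bodies in ℝ² with C² boundaries of positive curvature. Then ∫_{S¹} (κ_K/κ_L) dV_L ≥ (V(L)/V(K))·∫_{S¹} (κ_L/κ_K) dV_L. -/

import Mathlib

open Real MeasureTheory intervalIntegral

/-- The radius of curvature `1/κ = h + h''` of the convex body with support
function `h` (as a `2π`-periodic function of the normal angle). -/
noncomputable def bodyRho (h : ℝ → ℝ) (θ : ℝ) : ℝ := h θ + deriv (deriv h) θ

/-- The curvature `κ(u)` of the boundary at the point with outer normal angle `θ`,
so that `1/κ = h + h''`. -/
noncomputable def bodyCurv (h : ℝ → ℝ) (θ : ℝ) : ℝ := (bodyRho h θ)⁻¹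

/-- `h` is the support function of a planar convex body with `C²` boundary of
positive curvature: `h` is `C²`, `2π`-periodic and `h + h'' > 0`. -/
def IsSmoothBody (h : ℝ → ℝ) : Prop :=
  ContDiff ℝ 2 h ∧ Function.Periodic h (2 * π) ∧ ∀ θ : ℝ, 0 < bodyRho h θ

/-- The body is origin-symmetric iff its support function is `π`-antipodally invariant. -/
def OriginSymmetric (h : ℝ → ℝ) : Prop := ∀ θ : ℝ, h (θ + π) = h θ

/-- The area `V(K) = (1/2)∫_{S¹} h_K (h_K + h_K'') dθ`. -/
noncomputable def bodyArea (h : ℝ → ℝ) : ℝ :=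
  (1 / 2) * ∫ θ in (0:ℝ)..(2 * π), h θ * bodyRho h θ

/-- The perimeter `S(K) = ∫_{S¹} h_K dθ`. -/
noncomputable def bodyPerim (h : ℝ → ℝ) : ℝ := ∫ θ in (0:ℝ)..(2 * π), h θ

/-- The mixed volume `V(K, L) = (1/2)∫_{S¹} h_L (h_K + h_K'') dθ`. -/
noncomputable def bodyMixedVol (hK hL : ℝ → ℝ) : ℝ :=
  (1 / 2) * ∫ θ in (0:ℝ)..(2 * π), hL θ * bodyRho hK θ

/-- The integral `∫_{S¹} f dV_K` of `f` against the cone-volume measure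
`dV_K = (1/2) h_K dS_K = (1/2) h_K (h_K + h_K'') dθ`. -/
noncomputable def coneIntegral (h f : ℝ → ℝ) : ℝ :=
  (1 / 2) * ∫ θ in (0:ℝ)..(2 * π), f θ * (h θ * bodyRho h θ)

/-- Two bodies are dilates iff their support functions are positive multiples
of each other. -/
def AreDilates (hK hL : ℝ → ℝ) : Prop := ∃ c : ℝ, 0 < c ∧ ∀ θ : ℝ, hK θ = c * hL θ

/-!
Write `ρ_h = h + h''` (so `ρ = 1/κ`) and `Q(u, v) = ∫ (u v - u' v')` over a period. Integrating by
parts, `∫ u ρ_v = Q(u, v)`; in particular `Q(h_K, h_L) = 2 V(K, L)`.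

For an origin-symmetric body `h` is `π`-periodic, and Wirtinger's inequality on a half-period gives
`Q(f, f) ≤ 0` for every `π`-periodic `f` with a zero. Taking `f = h_L(p) h_K - h_K(p) h_L` yields
`h_L(p)² Q(h_K, h_K) - 2 h_L(p) h_K(p) Q(h_L, h_K) + h_K(p)² Q(h_L, h_L) ≤ 0` for every `p`, and
integrating against `ρ_K / h_L` gives `Q(h_L, h_L) S ≤ Q(h_K, h_K) Q(h_L, h_K)` with
`S = ∫ h_K² ρ_K / h_L`. On the other hand `Q(h_L, h_K) = ∫ h_K ρ_L`, and Cauchy–Schwarz with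
`(h_K ρ_L)² = (h_L ρ_L² / ρ_K) (h_K² ρ_K / h_L)` gives `Q(h_L, h_K)² ≤ (∫ h_L ρ_L² / ρ_K) S`.
Combining the two and dividing by `Q(h_L, h_K) > 0` gives
`V(L) V(K, L) ≤ V(K) ∫ (ρ_L / ρ_K) dV_L`, which is the claim.
-/

open Set Filter Topology

theorem Function.Periodic.deriv {𝕜 F : Type*} [NontriviallyNormedField 𝕜] [NormedAddCommGroup F]
    [NormedSpace 𝕜 F] {f : 𝕜 → F} {c : 𝕜} (hf : Function.Periodic f c) :
    Function.Periodic (deriv f) c := fun x => by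
  rw [← deriv_comp_add_const, show (fun y => f (y + c)) = f from funext hf]

theorem intervalIntegral.integral_mul_add_mul_add_mul {f g k : ℝ → ℝ} {a b : ℝ}
    (hf : IntervalIntegrable f volume a b) (hg : IntervalIntegrable g volume a b)
    (hk : IntervalIntegrable k volume a b) (r s t : ℝ) :
    ∫ x in a..b, (r * f x + s * g x + t * k x) =
      r * (∫ x in a..b, f x) + s * (∫ x in a..b, g x) + t * ∫ x in a..b, k x := by
  rw [integral_add ((hf.const_mul r).add (hg.const_mul s)) (hk.const_mul t),
    integral_add (hf.const_mul r) (hg.const_mul s), integral_const_mul, integral_const_mul,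
    integral_const_mul]

theorem sq_integral_le_integral_mul_integral {α : Type*} [MeasurableSpace α] {μ : Measure α}
    {f g₁ g₂ : α → ℝ} (hf : Integrable f μ) (hg₁ : Integrable g₁ μ) (hg₂ : Integrable g₂ μ)
    (hg₁0 : ∀ x, 0 ≤ g₁ x) (hg₂0 : ∀ x, 0 ≤ g₂ x) (hfg : ∀ x, f x ^ 2 ≤ g₁ x * g₂ x) :
    (∫ x, f x ∂μ) ^ 2 ≤ (∫ x, g₁ x ∂μ) * ∫ x, g₂ x ∂μ := by
  have hquad : ∀ t : ℝ,
      0 ≤ (∫ x, g₁ x ∂μ) * (t * t) + (-2 * ∫ x, f x ∂μ) * t + ∫ x, g₂ x ∂μ := by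
    intro t
    have hpt : ∀ x, 0 ≤ g₁ x * (t * t) + -2 * f x * t + g₂ x := fun x => by
      rcases (hg₁0 x).eq_or_lt with h0 | hpos
      · have hfx := hfg x
        rw [← h0, zero_mul] at hfx
        rw [← h0, pow_eq_zero_iff two_ne_zero |>.1 (le_antisymm hfx (sq_nonneg _))]
        simpa using hg₂0 x
      · refine (mul_nonneg_iff_of_pos_left hpos).1 ?_
        nlinarith [sq_nonneg (g₁ x * t - f x), hfg x]
    calc (0:ℝ) ≤ ∫ x, (g₁ x * (t * t) + -2 * f x * t + g₂ x) ∂μ := integral_nonneg hpt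
      _ = _ := by
        rw [integral_add (f := fun x => g₁ x * (t * t) + -2 * f x * t)
            ((hg₁.mul_const _).add ((hf.const_mul _).mul_const _)) hg₂,
          integral_add (f := fun x => g₁ x * (t * t)) (g := fun x => -2 * f x * t)
            (hg₁.mul_const _) ((hf.const_mul _).mul_const _), MeasureTheory.integral_mul_const,
          MeasureTheory.integral_mul_const, MeasureTheory.integral_const_mul]
  have hdisc := discrim_le_zero hquad
  rw [discrim] at hdisc
  nlinarith

theorem sq_mul_integral_sq_le_integral_deriv_sq {f : ℝ → ℝ} {a b c : ℝ} (hf : Differentiable ℝ f)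
    (hf' : Continuous (deriv f)) (hab : a ≤ b) (hc : 0 ≤ c) (hcπ : c * (b - a) < π)
    (ha : f a = 0) (hb : f b = 0) :
    c ^ 2 * ∫ θ in a..b, f θ ^ 2 ≤ ∫ θ in a..b, deriv f θ ^ 2 := by
  set s : ℝ → ℝ := fun θ => c * (θ - (a + b) / 2)
  have hcos : ∀ θ ∈ uIcc a b, 0 < cos (s θ) := by
    intro θ hθ
    rw [uIcc_of_le hab] at hθ
    apply cos_pos_of_mem_Ioo
    constructor <;> simp only [s] <;>
      nlinarith [mul_nonneg hc (sub_nonneg.2 hθ.1), mul_nonneg hc (sub_nonneg.2 hθ.2)]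
  have htan : ContinuousOn (fun θ => tan (s θ)) (uIcc a b) :=
    continuousOn_tan.comp (by fun_prop : Continuous s).continuousOn
      fun θ hθ => (hcos θ hθ).ne'
  -- `c tan(s θ) f(θ)²` vanishes at both ends, and its derivative `P'` is what turns
  -- `f'² - c² f²` into a square (`hid`).
  set P' : ℝ → ℝ := fun θ =>
    c ^ 2 * (1 + tan (s θ) ^ 2) * f θ ^ 2 + 2 * c * tan (s θ) * f θ * deriv f θ
  have hP : ∀ θ ∈ uIcc a b, HasDerivAt (fun θ => c * tan (s θ) * f θ ^ 2) (P' θ) θ := by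
    intro θ hθ
    have hs : HasDerivAt s c θ := by
      simpa using ((hasDerivAt_id θ).sub_const ((a + b) / 2)).const_mul c
    refine ((((hasDerivAt_tan (hcos θ hθ).ne').comp θ hs).const_mul c).fun_mul
      ((hf θ).hasDerivAt.fun_pow 2)).congr_deriv ?_
    have := (hcos θ hθ).ne'
    simp only [P', Function.comp, Nat.cast_ofNat, tan_eq_sin_div_cos]
    field_simp
    linear_combination (-c ^ 2 * f θ ^ 2) * sin_sq_add_cos_sq (s θ)
  have hP'int : IntervalIntegrable P' volume a b :=
    (((continuousOn_const.mul (continuousOn_const.add (htan.pow 2))).mul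
      (hf.continuous.pow 2).continuousOn).add (((continuousOn_const.mul htan).mul
      hf.continuous.continuousOn).mul hf'.continuousOn)).intervalIntegrable
  have hsq_int : IntervalIntegrable (fun θ => (deriv f θ + c * tan (s θ) * f θ) ^ 2) volume a b :=
    ((hf'.continuousOn.add ((continuousOn_const.mul htan).mul hf.continuous.continuousOn)).pow 2
      ).intervalIntegrable
  have hid : ∀ θ ∈ uIcc a b,
      deriv f θ ^ 2 - c ^ 2 * f θ ^ 2 = (deriv f θ + c * tan (s θ) * f θ) ^ 2 - P' θ :=
    fun θ _ => by simp only [P']; ring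
  have hnn : 0 ≤ ∫ θ in a..b, (deriv f θ ^ 2 - c ^ 2 * f θ ^ 2) := by
    rw [integral_congr hid, integral_sub hsq_int hP'int, integral_eq_sub_of_hasDerivAt hP hP'int]
    simpa [ha, hb] using integral_nonneg hab fun θ _ => sq_nonneg _
  rwa [integral_sub (f := fun θ => deriv f θ ^ 2) (g := fun θ => c ^ 2 * f θ ^ 2)
    ((hf'.pow 2).intervalIntegrable _ _)
    ((continuous_const.mul (hf.continuous.pow 2)).intervalIntegrable _ _),
    intervalIntegral.integral_const_mul, sub_nonneg] at hnn

theorem integral_sq_le_integral_deriv_sq {f : ℝ → ℝ} {a b : ℝ} (hf : Differentiable ℝ f)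
    (hf' : Continuous (deriv f)) (hab : a < b) (ha : f a = 0) (hb : f b = 0) :
    (π / (b - a)) ^ 2 * ∫ θ in a..b, f θ ^ 2 ≤ ∫ θ in a..b, deriv f θ ^ 2 := by
  have hlim : Tendsto (fun c : ℝ => c ^ 2 * ∫ θ in a..b, f θ ^ 2) (𝓝[<] (π / (b - a)))
      (𝓝 ((π / (b - a)) ^ 2 * ∫ θ in a..b, f θ ^ 2)) :=
    ((continuous_pow 2).mul continuous_const).continuousAt.tendsto.mono_left nhdsWithin_le_nhds
  refine le_of_tendsto hlim ?_
  filter_upwards [Ioo_mem_nhdsLT (div_pos pi_pos (sub_pos.2 hab))] with c hc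
  exact sq_mul_integral_sq_le_integral_deriv_sq hf hf' hab.le hc.1.le
    ((lt_div_iff₀ (sub_pos.2 hab)).1 hc.2) ha hb

theorem continuous_bodyRho {h : ℝ → ℝ} (hc : ContDiff ℝ 2 h) : Continuous (bodyRho h) := by
  unfold bodyRho; fun_prop

/-- `h(θ) + h(θ + π) = ∫_θ^{θ+π} sin(φ - θ) ρ(φ) dφ`, since the integrand is the derivative of
`sin(φ - θ) h'(φ) - cos(φ - θ) h(φ)`. -/
theorem add_add_pi_pos_of_bodyRho_pos {h : ℝ → ℝ} (hc : ContDiff ℝ 2 h)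
    (hρ : ∀ θ, 0 < bodyRho h θ) (θ : ℝ) : 0 < h θ + h (θ + π) := by
  have hF : ∀ φ ∈ uIcc θ (θ + π), HasDerivAt
      (fun φ => sin (φ - θ) * deriv h φ - cos (φ - θ) * h φ) (sin (φ - θ) * bodyRho h φ) φ := by
    intro φ _
    have hlin := (hasDerivAt_id φ).sub_const θ
    refine ((hlin.sin.fun_mul (hc.differentiable_deriv_two φ).hasDerivAt).fun_sub
      (hlin.cos.fun_mul (hc.differentiable two_ne_zero φ).hasDerivAt)).congr_deriv ?_
    simp only [bodyRho, id]; ring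
  have hint : IntervalIntegrable (fun φ => sin (φ - θ) * bodyRho h φ) volume θ (θ + π) :=
    Continuous.intervalIntegrable (by unfold bodyRho; fun_prop) _ _
  have hpos : 0 < ∫ φ in θ..(θ + π), sin (φ - θ) * bodyRho h φ :=
    intervalIntegral_pos_of_pos_on hint
      (fun φ hφ => mul_pos (sin_pos_of_pos_of_lt_pi (by linarith [hφ.1]) (by linarith [hφ.2]))
        (hρ φ)) (by linarith [pi_pos])
  rw [integral_eq_sub_of_hasDerivAt hF hint] at hpos
  simp only [add_sub_cancel_left, sin_pi, zero_mul, cos_pi, neg_mul, one_mul, sub_neg_eq_add,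
    zero_add, sub_self, sin_zero, cos_zero, zero_sub] at hpos
  linarith

theorem IsSmoothBody.pos_of_originSymmetric {h : ℝ → ℝ} (hb : IsSmoothBody h)
    (hs : OriginSymmetric h) (θ : ℝ) : 0 < h θ := by
  have := add_add_pi_pos_of_bodyRho_pos hb.1 hb.2.2 θ
  rw [hs θ] at this
  linarith

theorem integral_mul_bodyRho_pos {u v : ℝ → ℝ} (hu : Continuous u) (hu0 : ∀ θ, 0 < u θ)
    (hv : ContDiff ℝ 2 v) (hρ : ∀ θ, 0 < bodyRho v θ) :
    0 < ∫ θ in (0:ℝ)..(2 * π), u θ * bodyRho v θ :=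
  intervalIntegral_pos_of_pos_on ((hu.mul (continuous_bodyRho hv)).intervalIntegrable _ _)
    (fun θ _ => mul_pos (hu0 θ) (hρ θ)) two_pi_pos

/-- The symmetric bilinear form with `mixedForm h_K h_L = 2 V(K, L)` on support functions. -/
noncomputable def mixedForm (u v : ℝ → ℝ) : ℝ :=
  ∫ θ in (0:ℝ)..(2 * π), (u θ * v θ - deriv u θ * deriv v θ)

theorem mixedForm_comm (u v : ℝ → ℝ) : mixedForm u v = mixedForm v u :=
  integral_congr fun θ _ => by ring

theorem integral_mul_bodyRho_eq_mixedForm {u v : ℝ → ℝ} (hu : ContDiff ℝ 1 u)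
    (hv : ContDiff ℝ 2 v) (hup : Function.Periodic u (2 * π))
    (hvp : Function.Periodic v (2 * π)) :
    ∫ θ in (0:ℝ)..(2 * π), u θ * bodyRho v θ = mixedForm u v := by
  have hu' : Continuous (deriv u) := hu.continuous_deriv_one
  have hv' : Continuous (deriv v) := hv.continuous_deriv one_le_two
  have hv'' : Continuous (deriv (deriv v)) := by fun_prop
  have hibp := integral_mul_deriv_eq_deriv_mul (a := 0) (b := 2 * π)
    (fun θ _ => (hu.differentiable one_ne_zero θ).hasDerivAt)
    (fun θ _ => (hv.differentiable_deriv_two θ).hasDerivAt)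
    (hu'.intervalIntegrable _ _) (hv''.intervalIntegrable _ _)
  have hu0 : u (2 * π) = u 0 := by simpa using hup 0
  have hv0 : deriv v (2 * π) = deriv v 0 := by simpa using hvp.deriv 0
  calc ∫ θ in (0:ℝ)..(2 * π), u θ * bodyRho v θ
      = (∫ θ in (0:ℝ)..(2 * π), u θ * v θ) + ∫ θ in (0:ℝ)..(2 * π), u θ * deriv (deriv v) θ := by
        rw [← integral_add ((hu.continuous.fun_mul hv.continuous).intervalIntegrable _ _)
          ((hu.continuous.fun_mul hv'').intervalIntegrable _ _)]
        exact integral_congr fun θ _ => by simp only [bodyRho]; ring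
    _ = (∫ θ in (0:ℝ)..(2 * π), u θ * v θ) - ∫ θ in (0:ℝ)..(2 * π), deriv u θ * deriv v θ := by
        rw [hibp, hu0, hv0, sub_self, zero_sub, sub_eq_add_neg]
    _ = mixedForm u v :=
        (integral_sub ((hu.continuous.fun_mul hv.continuous).intervalIntegrable _ _)
          ((hu'.fun_mul hv').intervalIntegrable _ _)).symm

theorem mixedForm_self_nonpos_of_periodic {f : ℝ → ℝ} (hf : ContDiff ℝ 1 f)
    (hper : Function.Periodic f π) {p : ℝ} (hp : f p = 0) : mixedForm f f ≤ 0 := by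
  have hdouble : ∀ G : ℝ → ℝ, Function.Periodic G π → Continuous G →
      ∫ θ in (0:ℝ)..(2 * π), G θ = 2 * ∫ θ in p..(p + π), G θ := by
    intro G hG hGc
    have := hG.intervalIntegral_add_zsmul_eq 2 0 fun _ _ => hGc.intervalIntegrable _ _
    have hshift := hG.intervalIntegral_add_eq 0 p
    simp only [zero_add, zsmul_eq_mul, Int.cast_ofNat] at this hshift
    rw [this, hshift]
  have hwirt := integral_sq_le_integral_deriv_sq (hf.differentiable one_ne_zero)
    hf.continuous_deriv_one (lt_add_of_pos_right p pi_pos) hp (by rw [hper, hp])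
  rw [add_sub_cancel_left, div_self pi_ne_zero, one_pow, one_mul] at hwirt
  have hf2 : Continuous fun θ => f θ ^ 2 := hf.continuous.pow 2
  have hf'2 : Continuous fun θ => deriv f θ ^ 2 := hf.continuous_deriv_one.pow 2
  calc mixedForm f f = (∫ θ in (0:ℝ)..(2 * π), f θ ^ 2) - ∫ θ in (0:ℝ)..(2 * π), deriv f θ ^ 2 := by
        rw [← integral_sub (hf2.intervalIntegrable _ _) (hf'2.intervalIntegrable _ _)]
        exact integral_congr fun θ _ => by ring
    _ ≤ 0 := by
        rw [hdouble _ (fun θ => by simp only [hper θ]) hf2,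
          hdouble _ (fun θ => by simp only [hper.deriv θ]) hf'2]
        linarith

theorem mixedForm_mul_sub_mul_self {h k : ℝ → ℝ} (hh : ContDiff ℝ 1 h) (hk : ContDiff ℝ 1 k)
    (a b : ℝ) :
    mixedForm (fun θ => a * k θ - b * h θ) (fun θ => a * k θ - b * h θ) =
      a ^ 2 * mixedForm k k - 2 * a * b * mixedForm h k + b ^ 2 * mixedForm h h := by
  have hd : deriv (fun θ => a * k θ - b * h θ) = fun θ => a * deriv k θ - b * deriv h θ :=
    funext fun θ => (((hk.differentiable one_ne_zero θ).hasDerivAt.const_mul a).fun_sub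
      ((hh.differentiable one_ne_zero θ).hasDerivAt.const_mul b)).deriv
  have hint : ∀ u v : ℝ → ℝ, ContDiff ℝ 1 u → ContDiff ℝ 1 v →
      IntervalIntegrable (fun θ => u θ * v θ - deriv u θ * deriv v θ) volume 0 (2 * π) :=
    fun u v hu hv => ((hu.continuous.fun_mul hv.continuous).fun_sub
      (hu.continuous_deriv_one.fun_mul hv.continuous_deriv_one)).intervalIntegrable _ _
  unfold mixedForm
  rw [hd]
  calc _ = ∫ θ in (0:ℝ)..(2 * π), (a ^ 2 * (k θ * k θ - deriv k θ * deriv k θ)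
          + -(2 * a * b) * (h θ * k θ - deriv h θ * deriv k θ)
          + b ^ 2 * (h θ * h θ - deriv h θ * deriv h θ)) :=
        integral_congr fun θ _ => by ring
    _ = _ := by
        rw [integral_mul_add_mul_add_mul (hint k k hk hk) (hint h k hh hk) (hint h h hh hh)]
        ring

theorem mixedForm_quadratic_nonpos {h k : ℝ → ℝ} (hh : ContDiff ℝ 1 h) (hk : ContDiff ℝ 1 k)
    (hhp : Function.Periodic h π) (hkp : Function.Periodic k π) (p : ℝ) :
    h p ^ 2 * mixedForm k k - 2 * h p * k p * mixedForm h k + k p ^ 2 * mixedForm h h ≤ 0 := by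
  rw [← mixedForm_mul_sub_mul_self hh hk]
  exact mixedForm_self_nonpos_of_periodic ((contDiff_const.mul hk).sub (contDiff_const.mul hh))
    (fun θ => by simp only [hhp θ, hkp θ]) (show h p * k p - k p * h p = 0 by ring)

theorem IsSmoothBody.integral_mul_bodyRho {u v : ℝ → ℝ} (bu : IsSmoothBody u)
    (bv : IsSmoothBody v) : ∫ θ in (0:ℝ)..(2 * π), u θ * bodyRho v θ = mixedForm u v :=
  integral_mul_bodyRho_eq_mixedForm (bu.1.of_le one_le_two) bv.1 bu.2.1 bv.2.1

section Bodies

variable {hK hL : ℝ → ℝ}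

theorem mixedForm_sq_le (bK : IsSmoothBody hK) (bL : IsSmoothBody hL) (sL : OriginSymmetric hL) :
    mixedForm hL hK ^ 2 ≤ (∫ θ in (0:ℝ)..(2 * π), hL θ * bodyRho hL θ ^ 2 / bodyRho hK θ) *
      ∫ θ in (0:ℝ)..(2 * π), hK θ ^ 2 * bodyRho hK θ / hL θ := by
  have hLpos := bL.pos_of_originSymmetric sL
  have hρK := bK.2.2
  have cK := bK.1.continuous
  have cL := bL.1.continuous
  have cρK := continuous_bodyRho bK.1
  have cρL := continuous_bodyRho bL.1
  rw [mixedForm_comm, ← bK.integral_mul_bodyRho bL]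
  simp only [integral_of_le two_pi_pos.le]
  refine sq_integral_le_integral_mul_integral (cK.mul cρL).integrableOn_Ioc
    ((cL.mul (cρL.pow 2)).div cρK fun θ => (hρK θ).ne').integrableOn_Ioc
    (((cK.pow 2).mul cρK).div cL fun θ => (hLpos θ).ne').integrableOn_Ioc
    (fun θ => div_nonneg (mul_nonneg (hLpos θ).le (sq_nonneg _)) (hρK θ).le)
    (fun θ => div_nonneg (mul_nonneg (sq_nonneg _) (hρK θ).le) (hLpos θ).le) fun θ => le_of_eq ?_
  field_simp [(hρK θ).ne', (hLpos θ).ne']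

theorem mixedForm_mul_integral_le (bK : IsSmoothBody hK) (bL : IsSmoothBody hL)
    (sK : OriginSymmetric hK) (sL : OriginSymmetric hL) :
    mixedForm hL hL * (∫ θ in (0:ℝ)..(2 * π), hK θ ^ 2 * bodyRho hK θ / hL θ) ≤
      mixedForm hK hK * mixedForm hL hK := by
  have hLpos := bL.pos_of_originSymmetric sL
  have hρK := bK.2.2
  have cK := bK.1.continuous
  have cL := bL.1.continuous
  have cρK := continuous_bodyRho bK.1
  have hloc := mixedForm_quadratic_nonpos (bL.1.of_le one_le_two) (bK.1.of_le one_le_two) sL sK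
  have hint : 0 ≤ ∫ θ in (0:ℝ)..(2 * π), (-mixedForm hK hK * (hL θ * bodyRho hK θ)
      + 2 * mixedForm hL hK * (hK θ * bodyRho hK θ)
      + -mixedForm hL hL * (hK θ ^ 2 * bodyRho hK θ / hL θ)) := by
    refine integral_nonneg two_pi_pos.le fun θ _ => ?_
    have hw : 0 ≤ bodyRho hK θ / hL θ := div_nonneg (hρK θ).le (hLpos θ).le
    calc (0:ℝ) ≤ bodyRho hK θ / hL θ * -(hL θ ^ 2 * mixedForm hK hK
          - 2 * hL θ * hK θ * mixedForm hL hK + hK θ ^ 2 * mixedForm hL hL) :=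
          mul_nonneg hw (neg_nonneg.2 (hloc θ))
      _ = _ := by field_simp [(hLpos θ).ne']; ring
  rw [integral_mul_add_mul_add_mul (f := fun θ => hL θ * bodyRho hK θ)
    (g := fun θ => hK θ * bodyRho hK θ) (k := fun θ => hK θ ^ 2 * bodyRho hK θ / hL θ)
    ((cL.mul cρK).intervalIntegrable _ _)
    ((cK.mul cρK).intervalIntegrable _ _)
    ((((cK.pow 2).mul cρK).div cL fun θ => (hLpos θ).ne').intervalIntegrable _ _),
    bL.integral_mul_bodyRho bK,
    bK.integral_mul_bodyRho bK] at hint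
  linear_combination hint

theorem bodyArea_mul_bodyMixedVol_le (bK : IsSmoothBody hK) (bL : IsSmoothBody hL)
    (sK : OriginSymmetric hK) (sL : OriginSymmetric hL) :
    bodyArea hL * bodyMixedVol hK hL ≤
      bodyArea hK * coneIntegral hL (fun θ => bodyRho hL θ / bodyRho hK θ) := by
  have hLpos := bL.pos_of_originSymmetric sL
  have hρK := bK.2.2
  have hQLL : 0 < mixedForm hL hL := by
    rw [← bL.integral_mul_bodyRho bL]
    exact integral_mul_bodyRho_pos bL.1.continuous hLpos bL.1 bL.2.2
  have hQLK : 0 < mixedForm hL hK := by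
    rw [← bL.integral_mul_bodyRho bK]
    exact integral_mul_bodyRho_pos bL.1.continuous hLpos bK.1 hρK
  have hI : 0 ≤ ∫ θ in (0:ℝ)..(2 * π), hL θ * bodyRho hL θ ^ 2 / bodyRho hK θ :=
    integral_nonneg two_pi_pos.le fun θ _ =>
      div_nonneg (mul_nonneg (hLpos θ).le (sq_nonneg _)) (hρK θ).le
  have hcone : coneIntegral hL (fun θ => bodyRho hL θ / bodyRho hK θ) =
      1 / 2 * ∫ θ in (0:ℝ)..(2 * π), hL θ * bodyRho hL θ ^ 2 / bodyRho hK θ :=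
    congrArg (1 / 2 * ·) (integral_congr fun θ _ => by ring)
  rw [hcone, bodyArea, bodyArea, bodyMixedVol, bL.integral_mul_bodyRho bL,
    bK.integral_mul_bodyRho bK, bL.integral_mul_bodyRho bK]
  have hCS := mixedForm_sq_le bK bL sL
  have hloc := mixedForm_mul_integral_le bK bL sK sL
  nlinarith [mul_le_mul_of_nonneg_left hCS hQLL.le, mul_le_mul_of_nonneg_left hloc hI]

end Bodies

/-- For origin-symmetric planar convex bodies `K, L` with `C²`
boundaries of positive curvature,
`∫_{S¹} (κ_K/κ_L) dV_L ≥ (V(L)/V(K)) ∫_{S¹} (κ_L/κ_K) dV_L`. -/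
theorem stmt12 (hK hL : ℝ → ℝ) (bK : IsSmoothBody hK) (bL : IsSmoothBody hL)
    (sK : OriginSymmetric hK) (sL : OriginSymmetric hL) :
    coneIntegral hL (fun θ => bodyCurv hK θ / bodyCurv hL θ) ≥
      (bodyArea hL / bodyArea hK) *
        coneIntegral hL (fun θ => bodyCurv hL θ / bodyCurv hK θ) := by
  have hmixed : coneIntegral hL (fun θ => bodyCurv hL θ / bodyCurv hK θ) = bodyMixedVol hK hL :=
    congrArg (1 / 2 * ·) (integral_congr fun θ _ => by
      simp only [bodyCurv, inv_div_inv]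
      field_simp [(bL.2.2 θ).ne'])
  have hAK : 0 < bodyArea hK := mul_pos one_half_pos
    (integral_mul_bodyRho_pos bK.1.continuous (bK.pos_of_originSymmetric sK) bK.1 bK.2.2)
  rw [hmixed]
  simp only [bodyCurv, inv_div_inv]
  rw [ge_iff_le, div_mul_eq_mul_div, div_le_iff₀ hAK, mul_comm _ (bodyArea hK)]
  exact bodyArea_mul_bodyMixedVol_le bK bL sK sL
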